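/- Let 0 < σ₀ ≤ σ₁ and let σ, σ̃ : ℝ → ℝ be measurable with σ₀ ≤ σ(x) ≤ σ₁ and σ₀ ≤ σ̃(x) ≤ σ₁ for almost every x ∈ (0,1). Let S denote the supremum of ∫_0^1 |(1/σ(x) − 1/σ̃(x)) · ∫_0^x f(t) dt| dx, taken over all f : ℝ → ℝ integrable on (0,1) with ∫_0^1 |∫_0^x f(t) dt| dx ≤ 1. Then σ₁⁻² · esssup_{(0,1)} |σ − σ̃| ≤ S ≤ σ₀⁻² · esssup_{(0,1)} |σ − σ̃|. -/

import Mathlib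

/-!
With `w = 1/σ − 1/σ̃`, `S` is the norm of multiplication by `w` on primitives `x ↦ ∫_0^x f`
measured in `L¹(0,1)`, and this norm is `esssup_{(0,1)} |w|`. The bound `S ≤ esssup |w|` is
immediate. Conversely, trapezoidal primitives approximate the indicator of any `[a, b] ⊂ (0, 1)`
in `L¹`, so `∫_a^b |w| ≤ S (b − a)`, and Lebesgue differentiation gives `|w| ≤ S` almost
everywhere. Finally `|1/s − 1/t| = |s − t| / (s t)` with `σ₀² ≤ s t ≤ σ₁²` turns bounds on `|w|`
into bounds on `|σ − σ̃|`.
-/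

open MeasureTheory intervalIntegral Set Filter Topology

lemma abs_one_div_sub_one_div_le {m s t : ℝ} (hm : 0 < m) (hs : m ≤ s) (ht : m ≤ t) :
    |1 / s - 1 / t| ≤ (m ^ 2)⁻¹ * |s - t| := by
  have hs₀ : 0 < s := hm.trans_le hs
  have ht₀ : 0 < t := hm.trans_le ht
  rw [one_div, one_div, inv_sub_inv hs₀.ne' ht₀.ne', abs_div, abs_sub_comm,
    abs_of_pos (mul_pos hs₀ ht₀), inv_mul_eq_div]
  gcongr
  nlinarith

lemma abs_sub_le_mul_abs_one_div_sub_one_div {M s t : ℝ} (hs₀ : 0 < s) (ht₀ : 0 < t)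
    (hs : s ≤ M) (ht : t ≤ M) : |s - t| ≤ M ^ 2 * |1 / s - 1 / t| := by
  have hst : |s - t| = s * t * |1 / s - 1 / t| := by
    rw [one_div, one_div, inv_sub_inv hs₀.ne' ht₀.ne', abs_div, abs_sub_comm,
      abs_of_pos (mul_pos hs₀ ht₀), mul_div_cancel₀ _ (mul_pos hs₀ ht₀).ne']
  rw [hst]
  gcongr
  nlinarith

section essSup

variable {α : Type*} [MeasurableSpace α] {μ : Measure α} {f g : α → ℝ} {m M : ℝ}

lemma ae_abs_one_div_sub_one_div_le_essSup (hm : 0 < m)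
    (h : ∀ᵐ x ∂μ, (m ≤ f x ∧ f x ≤ M) ∧ (m ≤ g x ∧ g x ≤ M)) :
    ∀ᵐ x ∂μ, |1 / f x - 1 / g x| ≤ (m ^ 2)⁻¹ * essSup (fun x => |f x - g x|) μ := by
  have hess : ∀ᵐ x ∂μ, |f x - g x| ≤ essSup (fun x => |f x - g x|) μ := by
    refine ae_le_essSup ⟨M - m, eventually_map.2 ?_⟩
    filter_upwards [h] with x hx
    exact abs_sub_le_iff.2 ⟨by linarith, by linarith⟩
  filter_upwards [h, hess] with x hx hxM
  exact (abs_one_div_sub_one_div_le hm hx.1.1 hx.2.1).trans (by gcongr)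

lemma essSup_abs_sub_le_of_ae_abs_one_div_sub_one_div_le [(ae μ).NeBot] {C : ℝ} (hm : 0 < m)
    (h : ∀ᵐ x ∂μ, (m ≤ f x ∧ f x ≤ M) ∧ (m ≤ g x ∧ g x ≤ M))
    (hC : ∀ᵐ x ∂μ, |1 / f x - 1 / g x| ≤ C) :
    essSup (fun x => |f x - g x|) μ ≤ M ^ 2 * C := by
  refine essSup_le_of_ae_le _ ?_ (isCoboundedUnder_le_of_le _ fun x => abs_nonneg _)
  filter_upwards [h, hC] with x hx hxC
  exact (abs_sub_le_mul_abs_one_div_sub_one_div (hm.trans_le hx.1.1) (hm.trans_le hx.2.1)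
    hx.1.2 hx.2.2).trans (by gcongr)

end essSup

lemma integral_indicator_one_Ioc {c d x : ℝ} (hc : 0 ≤ c) (hcd : c ≤ d) (hx : 0 ≤ x) :
    ∫ t in (0:ℝ)..x, (Ioc c d).indicator 1 t = min x d - min x c := by
  rw [integral_of_le hx, setIntegral_indicator measurableSet_Ioc, Ioc_inter_Ioc, max_eq_right hc]
  simp only [Pi.one_apply, setIntegral_const, smul_eq_mul, mul_one, Real.volume_real_Ioc,
    max_def, min_def]
  split_ifs <;> linarith

/-- The primitive of `δ⁻¹ (𝟙_(a-δ, a] − 𝟙_(b, b+δ])` is the trapezoid rising on `[a - δ, a]`,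
equal to `1` on `[a, b]` and falling on `[b, b + δ]`. -/
lemma exists_integrable_primitive_between_indicators {a b δ : ℝ} (hδ : 0 < δ) (ha : δ ≤ a)
    (hab : a ≤ b) : ∃ f : ℝ → ℝ, Integrable f ∧ ∀ x, 0 ≤ x →
      (Icc a b).indicator 1 x ≤ ∫ t in (0:ℝ)..x, f t ∧
      ∫ t in (0:ℝ)..x, f t ≤ (Ioc (a - δ) (b + δ)).indicator 1 x := by
  have hind : ∀ c d : ℝ, Integrable ((Ioc c d).indicator (1 : ℝ → ℝ)) :=
    fun c d => (integrable_indicator_iff measurableSet_Ioc).2 (integrableOn_const (by simp))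
  refine ⟨fun t => δ⁻¹ * ((Ioc (a - δ) a).indicator 1 t - (Ioc b (b + δ)).indicator 1 t),
    ((hind _ _).sub (hind _ _)).const_mul _, fun x hx => ?_⟩
  rw [intervalIntegral.integral_const_mul,
    integral_sub (hind _ _).intervalIntegrable (hind _ _).intervalIntegrable,
    integral_indicator_one_Ioc (by linarith) (by linarith) hx,
    integral_indicator_one_Ioc (by linarith) (by linarith) hx,
    le_inv_mul_iff₀ hδ, inv_mul_le_iff₀ hδ]
  constructor
  · by_cases h : x ∈ Icc a b
    · rw [indicator_of_mem h, Pi.one_apply, mul_one]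
      obtain ⟨hax, hxb⟩ := h
      simp only [min_def]; split_ifs <;> linarith
    · rw [indicator_of_notMem h, mul_zero]
      simp only [min_def]; split_ifs <;> linarith
  · by_cases h : x ∈ Ioc (a - δ) (b + δ)
    · rw [indicator_of_mem h, Pi.one_apply, mul_one]
      simp only [min_def]; split_ifs <;> linarith
    · rw [indicator_of_notMem h, mul_zero]
      rw [mem_Ioc, not_and_or, not_lt, not_le] at h
      rcases h with h | h <;> simp only [min_def] <;> split_ifs <;> linarith

lemma ae_le_of_intervalIntegral_le {g : ℝ → ℝ} {S c d : ℝ}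
    (hg : IntervalIntegrable g volume c d)
    (h : ∀ a b, c < a → a ≤ b → b < d → ∫ x in a..b, g x ≤ S * (b - a)) :
    ∀ᵐ x ∂volume.restrict (Ioo c d), g x ≤ S := by
  have hmem : ∀ u ∈ Ioo c d, u ∈ uIcc c d := fun u hu => Icc_subset_uIcc (Ioo_subset_Icc_self hu)
  have hg' : ∀ u ∈ Ioo c d, IntervalIntegrable g volume c u :=
    fun u hu => hg.mono_set (uIcc_subset_uIcc left_mem_uIcc (hmem u hu))
  rw [ae_restrict_iff' measurableSet_Ioo]
  filter_upwards [hg.ae_hasDerivAt_integral] with x hx hxI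
  have hderiv := hx (hmem x hxI) c left_mem_uIcc
  refine le_of_tendsto (hasDerivAt_iff_tendsto_slope_left_right.1 hderiv).2 ?_
  filter_upwards [Ioo_mem_nhdsGT hxI.2] with y hy
  rw [slope_def_field, integral_interval_sub_left (hg' y ⟨hxI.1.trans hy.1, hy.2⟩) (hg' x hxI),
    div_le_iff₀ (sub_pos.2 hy.1)]
  exact h x y hxI.1 hy.1.le hy.2

def weightedPrimitiveIntegrals (w : ℝ → ℝ) : Set ℝ :=
  {r | ∃ f : ℝ → ℝ, IntegrableOn f (Ioo 0 1) ∧ ∫ x in (0:ℝ)..1, |∫ t in (0:ℝ)..x, f t| ≤ 1 ∧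
    r = ∫ x in (0:ℝ)..1, |w x * ∫ t in (0:ℝ)..x, f t|}

section weightedPrimitiveIntegrals

variable {w : ℝ → ℝ}

lemma zero_mem_weightedPrimitiveIntegrals : (0 : ℝ) ∈ weightedPrimitiveIntegrals w :=
  ⟨0, integrableOn_zero, by simp, by simp⟩

lemma integral_abs_mul_primitive_le {f : ℝ → ℝ} {C : ℝ} (hf : IntegrableOn f (Ioo 0 1))
    (hw : ∀ᵐ x ∂volume.restrict (Ioo 0 1), |w x| ≤ C) :
    ∫ x in (0:ℝ)..1, |w x * ∫ t in (0:ℝ)..x, f t| ≤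
      C * ∫ x in (0:ℝ)..1, |∫ t in (0:ℝ)..x, f t| := by
  have hF : ContinuousOn (fun x => ∫ t in (0:ℝ)..x, f t) (Icc 0 1) := by
    simpa [uIcc_of_le zero_le_one] using continuousOn_primitive_interval (a := (0:ℝ)) (b := 1)
      (by rwa [uIcc_of_le zero_le_one, integrableOn_Icc_iff_integrableOn_Ioo])
  simp only [integral_of_le zero_le_one, integral_Ioc_eq_integral_Ioo]
  rw [← MeasureTheory.integral_const_mul]
  refine integral_mono_of_nonneg (ae_of_all _ fun x => abs_nonneg _)
    ((hF.abs.integrableOn_Icc.mono_set Ioo_subset_Icc_self).const_mul C) ?_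
  filter_upwards [hw] with x hx
  rw [abs_mul]
  exact mul_le_mul_of_nonneg_right hx (abs_nonneg _)

lemma mem_upperBounds_weightedPrimitiveIntegrals {C : ℝ}
    (hw : ∀ᵐ x ∂volume.restrict (Ioo 0 1), |w x| ≤ C) :
    C ∈ upperBounds (weightedPrimitiveIntegrals w) := by
  have : (ae (volume.restrict (Ioo (0:ℝ) 1))).NeBot := ae_neBot.2 (by simp)
  have hC : 0 ≤ C := let ⟨x, hx⟩ := hw.exists; (abs_nonneg _).trans hx
  rintro _ ⟨f, hf, hf₁, rfl⟩
  exact (integral_abs_mul_primitive_le hf hw).trans (mul_le_of_le_one_right hC hf₁)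

lemma integral_abs_mul_primitive_le_mul {S : ℝ}
    (hS : S ∈ upperBounds (weightedPrimitiveIntegrals w))
    {f : ℝ → ℝ} (hf : IntegrableOn f (Ioo 0 1)) {L : ℝ} (hL : 0 < L)
    (hfL : ∫ x in (0:ℝ)..1, |∫ t in (0:ℝ)..x, f t| ≤ L) :
    ∫ x in (0:ℝ)..1, |w x * ∫ t in (0:ℝ)..x, f t| ≤ L * S := by
  have hscale := hS ⟨fun t => L⁻¹ * f t, hf.const_mul _, by
    simpa only [intervalIntegral.integral_const_mul, abs_mul, abs_inv, abs_of_pos hL,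
      inv_mul_le_iff₀ hL, mul_one] using hfL, rfl⟩
  simpa only [intervalIntegral.integral_const_mul, mul_left_comm (w _), abs_mul (L⁻¹), abs_inv,
    abs_of_pos hL, inv_mul_le_iff₀ hL] using hscale

lemma intervalIntegral_abs_le_of_mem_upperBounds {S : ℝ}
    (hS : S ∈ upperBounds (weightedPrimitiveIntegrals w)) (hw : IntervalIntegrable w volume 0 1)
    {a b δ : ℝ} (hδ : 0 < δ) (ha : δ ≤ a) (hab : a ≤ b) (hb : b + δ ≤ 1) :
    ∫ x in a..b, |w x| ≤ S * (b - a + 2 * δ) := by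
  obtain ⟨f, hf, hF⟩ := exists_integrable_primitive_between_indicators hδ ha hab
  set F : ℝ → ℝ := fun x => ∫ t in (0:ℝ)..x, f t
  have hFc : Continuous F := continuous_primitive (fun _ _ => hf.intervalIntegrable) 0
  have hF₀ : ∀ x, 0 ≤ x → 0 ≤ F x := fun x hx => (indicator_nonneg (by simp) x).trans (hF x hx).1
  have hwF : IntervalIntegrable (fun x => |w x * F x|) volume 0 1 :=
    (hw.mul_continuousOn hFc.continuousOn).abs
  have hFL : ∫ x in (0:ℝ)..1, |F x| ≤ b - a + 2 * δ := by
    calc ∫ x in (0:ℝ)..1, |F x| ≤ ∫ x in (0:ℝ)..1, (Ioc (a - δ) (b + δ)).indicator 1 x := by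
          refine integral_mono_on zero_le_one (hFc.abs.intervalIntegrable _ _)
            ((integrable_indicator_iff measurableSet_Ioc).2
              (integrableOn_const (by simp))).intervalIntegrable fun x hx => ?_
          rw [abs_of_nonneg (hF₀ x hx.1)]
          exact (hF x hx.1).2
      _ = b - a + 2 * δ := by
          rw [integral_indicator_one_Ioc (by linarith) (by linarith) zero_le_one, min_eq_right hb,
            min_eq_right (by linarith)]
          ring
  have hsub : uIcc a b ⊆ uIcc 0 1 := by
    rw [uIcc_of_le hab, uIcc_of_le zero_le_one]
    exact Icc_subset_Icc (by linarith) (by linarith)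
  calc ∫ x in a..b, |w x| ≤ ∫ x in a..b, |w x * F x| := by
        refine integral_mono_on hab (hw.abs.mono_set hsub) (hwF.mono_set hsub) fun x hx => ?_
        have h1 : 1 ≤ F x := by simpa [indicator_of_mem hx] using (hF x (by linarith [hx.1])).1
        rw [abs_mul]
        exact le_mul_of_one_le_right (abs_nonneg _) (h1.trans (le_abs_self _))
    _ ≤ ∫ x in (0:ℝ)..1, |w x * F x| := integral_mono_interval (by linarith) hab (by linarith)
        (ae_of_all _ fun _ => abs_nonneg _) hwF
    _ ≤ (b - a + 2 * δ) * S :=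
        integral_abs_mul_primitive_le_mul hS hf.integrableOn (by linarith) hFL
    _ = S * (b - a + 2 * δ) := mul_comm _ _

lemma ae_abs_le_of_mem_upperBounds {S : ℝ} (hS : S ∈ upperBounds (weightedPrimitiveIntegrals w))
    (hw : IntervalIntegrable w volume 0 1) : ∀ᵐ x ∂volume.restrict (Ioo 0 1), |w x| ≤ S := by
  refine ae_le_of_intervalIntegral_le hw.abs fun a b ha hab hb => ?_
  have hlim : Tendsto (fun δ => S * (b - a + 2 * δ)) (𝓝[>] 0) (𝓝 (S * (b - a))) := by
    refine tendsto_nhdsWithin_of_tendsto_nhds ?_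
    simpa using ((continuous_const.add (continuous_const.mul continuous_id)).const_mul S).tendsto 0
  refine ge_of_tendsto hlim ?_
  filter_upwards [Ioo_mem_nhdsGT (lt_min ha (sub_pos.2 hb))] with δ hδ
  exact intervalIntegral_abs_le_of_mem_upperBounds hS hw hδ.1 (hδ.2.le.trans (min_le_left _ _))
    hab (by linarith [hδ.2.le.trans (min_le_right a (1 - b))])

end weightedPrimitiveIntegrals

/-- One-dimensional two-sided Lipschitz stability: with
`S = sup { ∫_0^1 |(1/σ(x) − 1/σ̃(x)) ∫_0^x f| dx : ∫_0^1 |∫_0^x f| dx ≤ 1 }`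
(the `‖·‖_*`-norm of `R_σ − R_σ̃`), one has
`σ₁⁻² ‖σ − σ̃‖_∞ ≤ S ≤ σ₀⁻² ‖σ − σ̃‖_∞`. -/
theorem resolvent_distance_two_sided_estimate
    (σ₀ σ₁ : ℝ) (hσ₀ : 0 < σ₀) (hσ₀₁ : σ₀ ≤ σ₁)
    (σ σ' : ℝ → ℝ) (hσm : Measurable σ) (hσ'm : Measurable σ')
    (hσb : ∀ᵐ x ∂volume, x ∈ Set.Ioo (0:ℝ) 1 → σ₀ ≤ σ x ∧ σ x ≤ σ₁)
    (hσ'b : ∀ᵐ x ∂volume, x ∈ Set.Ioo (0:ℝ) 1 → σ₀ ≤ σ' x ∧ σ' x ≤ σ₁)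
    (S : ℝ)
    (hS : S = sSup {r : ℝ | ∃ f : ℝ → ℝ, IntegrableOn f (Set.Ioo (0:ℝ) 1) volume ∧
        (∫ x in (0:ℝ)..1, |∫ t in (0:ℝ)..x, f t|) ≤ 1 ∧
        r = ∫ x in (0:ℝ)..1, |(1 / σ x - 1 / σ' x) * ∫ t in (0:ℝ)..x, f t|}) :
    (σ₁ ^ 2)⁻¹ * essSup (fun x => |σ x - σ' x|) (volume.restrict (Set.Ioo (0:ℝ) 1)) ≤ S ∧
    S ≤ (σ₀ ^ 2)⁻¹ * essSup (fun x => |σ x - σ' x|) (volume.restrict (Set.Ioo (0:ℝ) 1)) := by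
  have hS' : S = sSup (weightedPrimitiveIntegrals fun x => 1 / σ x - 1 / σ' x) := hS
  have hσσ' : ∀ᵐ x ∂volume.restrict (Ioo (0:ℝ) 1),
      (σ₀ ≤ σ x ∧ σ x ≤ σ₁) ∧ (σ₀ ≤ σ' x ∧ σ' x ≤ σ₁) := by
    rw [ae_restrict_iff' measurableSet_Ioo]
    filter_upwards [hσb, hσ'b] with x h h' hx using ⟨h hx, h' hx⟩
  have hwM := ae_abs_one_div_sub_one_div_le_essSup hσ₀ hσσ'
  have hw : IntervalIntegrable (fun x => 1 / σ x - 1 / σ' x) volume 0 1 := by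
    rw [intervalIntegrable_iff_integrableOn_Ioo_of_le zero_le_one]
    exact .of_bound (by simp)
      ((measurable_const.div hσm).sub (measurable_const.div hσ'm)).aestronglyMeasurable _ hwM
  have hbound := mem_upperBounds_weightedPrimitiveIntegrals hwM
  have hwS := ae_abs_le_of_mem_upperBounds (fun r hr => hS' ▸ le_csSup ⟨_, hbound⟩ hr) hw
  have : (ae (volume.restrict (Ioo (0:ℝ) 1))).NeBot := ae_neBot.2 (by simp)
  exact ⟨(inv_mul_le_iff₀ (by nlinarith)).2
      (essSup_abs_sub_le_of_ae_abs_one_div_sub_one_div_le hσ₀ hσσ' hwS),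
    hS' ▸ csSup_le ⟨0, zero_mem_weightedPrimitiveIntegrals⟩ hbound⟩
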